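/- arXiv:2402.12285 — 3 statements merged into one kernel-verified Lean document; each statement's English description precedes it below -/
import Mathlib

section
/- Let P be a finite nonempty set of points in ℝ², let d₁, d₂ ∈ P be a diametral pair of P with d₁ ≠ d₂, let v be a unit vector orthogonal to d₂ − d₁, and set m = inf_{p∈P} ⟪p, v⟫, M = sup_{p∈P} ⟪p, v⟫, E = M − m, c = (m + M)/2. Define the canonical endpoints q'ⱼ = dⱼ + (c − ⟪dⱼ, v⟫)·v for j = 1, 2. Then dist(q'₁, q'₂) = diam(P), and every point p ∈ P satisfies infDist(p, segment[q'₁, q'₂]) ≤ E/2. -/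
open scoped InnerProductSpace
set_option maxHeartbeats 800000

lemma perp_pair_eq_zero (u v w : EuclideanSpace ℝ (Fin 2)) (hu : u ≠ 0) (hv : ‖v‖ = 1)
    (huv : ⟪u, v⟫_ℝ = 0) (hw1 : ⟪u, w⟫_ℝ = 0) (hw2 : ⟪v, w⟫_ℝ = 0) : w = 0 := by
  set e : Fin 2 → EuclideanSpace ℝ (Fin 2) := ![‖u‖⁻¹ • u, v] with he
  have hnu : ‖u‖ ≠ 0 := norm_ne_zero_iff.mpr hu
  have horth : Orthonormal ℝ e := by
    constructor
    · intro i
      fin_cases i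
      · show ‖‖u‖⁻¹ • u‖ = 1
        rw [norm_smul]
        simp [hnu]
      · exact hv
    · intro i j hij
      fin_cases i <;> fin_cases j
      · exact absurd rfl hij
      · show ⟪‖u‖⁻¹ • u, v⟫_ℝ = 0
        rw [real_inner_smul_left, huv, mul_zero]
      · show ⟪v, ‖u‖⁻¹ • u⟫_ℝ = 0
        rw [real_inner_smul_right, real_inner_comm, huv, mul_zero]
      · exact absurd rfl hij
  have hei : ∀ i, ⟪e i, w⟫_ℝ = 0 := by
    intro i
    fin_cases i
    · show ⟪‖u‖⁻¹ • u, w⟫_ℝ = 0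
      rw [real_inner_smul_left, hw1, mul_zero]
    · exact hw2
  have hli := horth.linearIndependent
  have hcard : Fintype.card (Fin 2) = Module.finrank ℝ (EuclideanSpace ℝ (Fin 2)) := by
    simp
  have hspan := hli.span_eq_top_of_card_eq_finrank hcard
  have hwmem : w ∈ Submodule.span ℝ (Set.range e) := by rw [hspan]; trivial
  rw [Submodule.mem_span_range_iff_exists_fun] at hwmem
  obtain ⟨a, ha⟩ := hwmem
  have hz : ⟪w, w⟫_ℝ = 0 := by
    conv_lhs => rw [← ha]
    rw [sum_inner]
    apply Finset.sum_eq_zero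
    intro i _
    rw [real_inner_smul_left, ha, hei i, mul_zero]
  exact inner_self_eq_zero.mp hz

/-- **canonical solution.** Let `d₁ d₂` be a diametral pair of the finite
nonempty set `P`, `v` a unit direction orthogonal to `d₂ - d₁`, `m`/`M` the infimum/supremum
of the projections of `P` onto `v`, `E = M - m` the extent and `c = (m + M)/2`. The canonical
endpoints `q'ⱼ = dⱼ + (c − ⟪dⱼ, v⟫)·v` span a segment of length `diam P` that is within
distance `E/2` of every point of `P`. -/
theorem canonical_segment_properties
    (P : Finset (EuclideanSpace ℝ (Fin 2))) (hP : P.Nonempty)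
    (d₁ d₂ : EuclideanSpace ℝ (Fin 2)) (hd₁ : d₁ ∈ P) (hd₂ : d₂ ∈ P) (hne : d₁ ≠ d₂)
    (hdiam : dist d₁ d₂ = Metric.diam (P : Set (EuclideanSpace ℝ (Fin 2))))
    (v : EuclideanSpace ℝ (Fin 2)) (hv : ‖v‖ = 1) (hperp : ⟪d₂ - d₁, v⟫_ℝ = 0)
    (m M E c : ℝ)
    (hm : m = P.inf' hP fun p => ⟪p, v⟫_ℝ)
    (hM : M = P.sup' hP fun p => ⟪p, v⟫_ℝ)
    (hE : E = M - m) (hc : c = (m + M) / 2)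
    (q₁' q₂' : EuclideanSpace ℝ (Fin 2))
    (hq₁' : q₁' = d₁ + (c - ⟪d₁, v⟫_ℝ) • v)
    (hq₂' : q₂' = d₂ + (c - ⟪d₂, v⟫_ℝ) • v) :
    dist q₁' q₂' = Metric.diam (P : Set (EuclideanSpace ℝ (Fin 2))) ∧
      ∀ p ∈ P, Metric.infDist p (segment ℝ q₁' q₂') ≤ E / 2 := by
  set u : EuclideanSpace ℝ (Fin 2) := d₂ - d₁ with hu_def
  have hu : u ≠ 0 := sub_ne_zero.mpr (Ne.symm hne)
  have hdv : ⟪d₂, v⟫_ℝ = ⟪d₁, v⟫_ℝ := by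
    have h := hperp
    rw [inner_sub_left] at h
    linarith
  have hq : q₂' - q₁' = u := by
    rw [hq₁', hq₂', hdv, hu_def]
    abel
  have hq2 : q₂' = q₁' + u := by rw [← hq]; abel
  have hdist : dist q₁' q₂' = Metric.diam (P : Set (EuclideanSpace ℝ (Fin 2))) := by
    rw [← hdiam, dist_eq_norm, dist_eq_norm]
    rw [show q₁' - q₂' = -(q₂' - q₁') by abel, norm_neg, hq, hu_def,
      show d₁ - d₂ = -(d₂ - d₁) by abel, norm_neg]
  refine ⟨hdist, ?_⟩
  intro p hp
  have hbdd : Bornology.IsBounded (P : Set (EuclideanSpace ℝ (Fin 2))) :=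
    P.finite_toSet.isBounded
  have hDu : Metric.diam (P : Set (EuclideanSpace ℝ (Fin 2))) = ‖u‖ := by
    rw [← hdiam, dist_eq_norm, hu_def, show d₁ - d₂ = -(d₂ - d₁) by abel, norm_neg]
  have hp1 : ‖p - d₁‖ ≤ ‖u‖ := by
    rw [← dist_eq_norm, ← hDu]
    exact Metric.dist_le_diam_of_mem hbdd hp hd₁
  have hp2 : ‖p - d₂‖ ≤ ‖u‖ := by
    rw [← dist_eq_norm, ← hDu]
    exact Metric.dist_le_diam_of_mem hbdd hp hd₂
  have hpd2 : p - d₂ = (p - d₁) - u := by rw [hu_def]; abel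
  have e1 : ‖(p - d₁) - u‖ ^ 2 = ‖p - d₁‖ ^ 2 - 2 * ⟪p - d₁, u⟫_ℝ + ‖u‖ ^ 2 :=
    norm_sub_sq_real _ _
  have e2 : ⟪p - d₁, u⟫_ℝ = ⟪p - d₂, u⟫_ℝ + ‖u‖ ^ 2 := by
    rw [show p - d₁ = (p - d₂) + u by rw [hu_def]; abel, inner_add_left,
      real_inner_self_eq_norm_sq]
  have e3 : ‖(p - d₂) + u‖ ^ 2 = ‖p - d₂‖ ^ 2 + 2 * ⟪p - d₂, u⟫_ℝ + ‖u‖ ^ 2 :=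
    norm_add_sq_real _ _
  have hpd1 : p - d₁ = (p - d₂) + u := by rw [hu_def]; abel
  have h1 : 0 ≤ ⟪p - d₁, u⟫_ℝ := by
    have hsq : ‖(p - d₁) - u‖ ^ 2 ≤ ‖u‖ ^ 2 := by
      rw [← hpd2]; exact pow_le_pow_left₀ (norm_nonneg _) hp2 2
    nlinarith [sq_nonneg ‖p - d₁‖]
  have h2 : ⟪p - d₁, u⟫_ℝ ≤ ‖u‖ ^ 2 := by
    have hsq : ‖(p - d₂) + u‖ ^ 2 ≤ ‖u‖ ^ 2 := by
      rw [← hpd1]; exact pow_le_pow_left₀ (norm_nonneg _) hp1 2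
    nlinarith [sq_nonneg ‖p - d₂‖]
  have hnu : ‖u‖ ≠ 0 := norm_ne_zero_iff.mpr hu
  have hnu2 : (0:ℝ) < ‖u‖ ^ 2 := by positivity
  set t : ℝ := ⟪p - d₁, u⟫_ℝ / ‖u‖ ^ 2 with ht_def
  have ht0 : 0 ≤ t := div_nonneg h1 (le_of_lt hnu2)
  have ht1 : t ≤ 1 := by
    rw [ht_def, div_le_one hnu2]; exact h2
  set q : EuclideanSpace ℝ (Fin 2) := q₁' + t • u with hq_def
  have hqmem : q ∈ segment ℝ q₁' q₂' := by
    refine ⟨1 - t, t, by linarith, ht0, by ring, ?_⟩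
    rw [hq2, hq_def]
    module
  have huv : ⟪u, v⟫_ℝ = 0 := hperp
  set w : EuclideanSpace ℝ (Fin 2) := p - q with hw_def
  have hwform : w = (p - d₁) - (c - ⟪d₁, v⟫_ℝ) • v - t • u := by
    rw [hw_def, hq_def, hq₁']
    abel
  have hwu : ⟪u, w⟫_ℝ = 0 := by
    rw [hwform, inner_sub_right, inner_sub_right, real_inner_smul_right,
      real_inner_smul_right, huv, real_inner_self_eq_norm_sq, real_inner_comm, ht_def]
    field_simp
    ring
  have hwv : ⟪v, w⟫_ℝ = ⟪p, v⟫_ℝ - c := by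
    have hvv : ⟪v, v⟫_ℝ = 1 := by
      rw [real_inner_self_eq_norm_sq, hv]; norm_num
    have hvu : ⟪v, u⟫_ℝ = 0 := by rw [real_inner_comm]; exact huv
    rw [hwform, inner_sub_right, inner_sub_right, real_inner_smul_right,
      real_inner_smul_right, hvv, hvu, inner_sub_right, real_inner_comm v d₁,
      real_inner_comm v p]
    ring
  have hw' : w - ⟪v, w⟫_ℝ • v = 0 := by
    apply perp_pair_eq_zero u v _ hu hv huv
    · rw [inner_sub_right, real_inner_smul_right, huv, hwu]; ring
    · rw [inner_sub_right, real_inner_smul_right, real_inner_self_eq_norm_sq, hv]; ring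
  have hweq : w = ⟪v, w⟫_ℝ • v := by
    have := sub_eq_zero.mp hw'
    exact this
  have hnw : ‖w‖ = |⟪p, v⟫_ℝ - c| := by
    rw [hweq, norm_smul, hv, mul_one, hwv, Real.norm_eq_abs]
  have hmle : m ≤ ⟪p, v⟫_ℝ := by
    rw [hm]; exact Finset.inf'_le (fun p => ⟪p, v⟫_ℝ) hp
  have hMle : ⟪p, v⟫_ℝ ≤ M := by
    rw [hM]; exact Finset.le_sup' (fun p => ⟪p, v⟫_ℝ) hp
  have hbound : |⟪p, v⟫_ℝ - c| ≤ E / 2 := by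
    rw [abs_le]
    constructor <;> [skip; skip] <;> rw [hc, hE] <;> linarith
  calc Metric.infDist p (segment ℝ q₁' q₂') ≤ dist p q :=
        Metric.infDist_le_dist_of_mem hqmem
    _ = ‖w‖ := by rw [dist_eq_norm, hw_def]
    _ ≤ E / 2 := by rw [hnw]; exact hbound
end

section
/- Let P be a finite nonempty set of points in ℝ² and let r ≥ 0. Then there exists a line ℓ = {a + t·u : t ∈ ℝ} (with a ∈ ℝ², u a nonzero vector) such that every point p ∈ P satisfies infDist(p, ℓ) ≤ r, if and only if W(P) ≤ 2r. -/
open scoped InnerProductSpace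

/-- The extent of a finite nonempty point set `P` in the direction of a vector `v`. -/
noncomputable def extent (P : Finset (EuclideanSpace ℝ (Fin 2))) (hP : P.Nonempty)
    (v : EuclideanSpace ℝ (Fin 2)) : ℝ :=
  (P.sup' hP fun p => ⟪p, v⟫_ℝ) - (P.inf' hP fun p => ⟪p, v⟫_ℝ)

/-- The width of a finite nonempty point set `P`: the infimum, over unit directions `v`,
of the extent of `P` in direction `v`. -/
noncomputable def width (P : Finset (EuclideanSpace ℝ (Fin 2))) (hP : P.Nonempty) : ℝ :=
  ⨅ v : {v : EuclideanSpace ℝ (Fin 2) // ‖v‖ = 1}, extent P hP v.1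

/-- The perpendicular vector. -/
noncomputable def perp (v : EuclideanSpace ℝ (Fin 2)) : EuclideanSpace ℝ (Fin 2) :=
  WithLp.toLp 2 ![-(v 1), v 0]

lemma perp_apply_zero (v : EuclideanSpace ℝ (Fin 2)) : perp v 0 = -(v 1) := rfl
lemma perp_apply_one (v : EuclideanSpace ℝ (Fin 2)) : perp v 1 = v 0 := rfl

lemma inner_apply2 (x y : EuclideanSpace ℝ (Fin 2)) :
    ⟪x, y⟫_ℝ = x 0 * y 0 + x 1 * y 1 := by
  simp [PiLp.inner_apply, Fin.sum_univ_two, mul_comm]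

lemma norm_perp (v : EuclideanSpace ℝ (Fin 2)) : ‖perp v‖ = ‖v‖ := by
  rw [EuclideanSpace.norm_eq, EuclideanSpace.norm_eq]
  congr 1
  simp [Fin.sum_univ_two, perp_apply_zero, perp_apply_one]
  ring

lemma inner_perp (v : EuclideanSpace ℝ (Fin 2)) : ⟪v, perp v⟫_ℝ = 0 := by
  rw [inner_apply2, perp_apply_zero, perp_apply_one]; ring

lemma extent_nonneg (P : Finset (EuclideanSpace ℝ (Fin 2))) (hP : P.Nonempty)
    (v : EuclideanSpace ℝ (Fin 2)) : 0 ≤ extent P hP v := by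
  obtain ⟨p, hp⟩ := id hP
  have h1 : (P.inf' hP fun q => ⟪q, v⟫_ℝ) ≤ ⟪p, v⟫_ℝ := Finset.inf'_le _ hp
  have h2 : ⟪p, v⟫_ℝ ≤ P.sup' hP fun q => ⟪q, v⟫_ℝ := Finset.le_sup' (fun q => ⟪q, v⟫_ℝ) hp
  unfold extent; linarith

lemma sq_add_sq_of_norm_one {v : EuclideanSpace ℝ (Fin 2)} (hv : ‖v‖ = 1) :
    v 0 ^ 2 + v 1 ^ 2 = 1 := by
  have := real_inner_self_eq_norm_sq v
  rw [hv, inner_apply2] at this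
  nlinarith [this]

/-- Distance lower bound: projection onto a unit normal. -/
lemma abs_inner_le_infDist (a u v p : EuclideanSpace ℝ (Fin 2)) (hv : ‖v‖ = 1)
    (huv : ⟪u, v⟫_ℝ = 0) :
    |⟪p - a, v⟫_ℝ| ≤ Metric.infDist p {x | ∃ t : ℝ, x = a + t • u} := by
  haveI : Nonempty {x : EuclideanSpace ℝ (Fin 2) // x ∈ {x | ∃ t : ℝ, x = a + t • u}} :=
    ⟨⟨a, 0, by simp⟩⟩
  rw [Metric.infDist_eq_iInf]
  apply le_ciInf
  rintro ⟨x, t, rfl⟩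
  · have h1 : ⟪p - a, v⟫_ℝ = ⟪p - (a + t • u), v⟫_ℝ := by
      rw [inner_sub_left, inner_sub_left, inner_add_left, inner_smul_left, huv]
      simp
    rw [h1]
    calc |⟪p - (a + t • u), v⟫_ℝ| ≤ ‖p - (a + t • u)‖ * ‖v‖ := abs_real_inner_le_norm _ _
      _ = dist p (a + t • u) := by rw [hv, mul_one, dist_eq_norm]

/-- There is a line within distance `r` of every point of `P` if and only
if the width of `P` is at most `2r`. -/
theorem exists_line_iff_width_le
    (P : Finset (EuclideanSpace ℝ (Fin 2))) (hP : P.Nonempty) (r : ℝ) (hr : 0 ≤ r) :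
    (∃ (a u : EuclideanSpace ℝ (Fin 2)), u ≠ 0 ∧
        ∀ p ∈ P, Metric.infDist p {x | ∃ t : ℝ, x = a + t • u} ≤ r) ↔
      width P hP ≤ 2 * r := by
  have hbdd : BddBelow (Set.range fun v : {v : EuclideanSpace ℝ (Fin 2) // ‖v‖ = 1} =>
      extent P hP v.1) := ⟨0, by rintro x ⟨v, rfl⟩; exact extent_nonneg P hP v.1⟩
  constructor
  · rintro ⟨a, u, hu, h⟩
    set v : EuclideanSpace ℝ (Fin 2) := ‖u‖⁻¹ • perp u with hv_def
    have hu' : ‖u‖ ≠ 0 := norm_ne_zero_iff.2 hu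
    have hv : ‖v‖ = 1 := by
      rw [hv_def, norm_smul, norm_perp, norm_inv, norm_norm, inv_mul_cancel₀ hu']
    have huv : ⟪u, v⟫_ℝ = 0 := by
      rw [hv_def, real_inner_smul_right, inner_perp, mul_zero]
    have key : ∀ p ∈ P, |⟪p - a, v⟫_ℝ| ≤ r := fun p hp =>
      (abs_inner_le_infDist a u v p hv huv).trans (h p hp)
    have hext : extent P hP v ≤ 2 * r := by
      have hsup : (P.sup' hP fun p => ⟪p, v⟫_ℝ) ≤ ⟪a, v⟫_ℝ + r := by
        apply Finset.sup'_le
        intro p hp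
        have := (abs_le.1 (key p hp)).2
        rw [inner_sub_left] at this; linarith
      have hinf : ⟪a, v⟫_ℝ - r ≤ P.inf' hP fun p => ⟪p, v⟫_ℝ := by
        apply Finset.le_inf'
        intro p hp
        have := (abs_le.1 (key p hp)).1
        rw [inner_sub_left] at this; linarith
      unfold extent; linarith
    calc width P hP ≤ extent P hP v := ciInf_le hbdd ⟨v, hv⟩
      _ ≤ 2 * r := hext
  · intro hw
    -- get a minimizing direction by compactness
    obtain ⟨v, hv_mem, hv_min⟩ := (isCompact_sphere (0 : EuclideanSpace ℝ (Fin 2)) 1).exists_isMinOn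
      (NormedSpace.sphere_nonempty.2 zero_le_one)
      (Continuous.continuousOn (by
        apply Continuous.sub
        · exact Continuous.finset_sup'_apply hP fun p _ => continuous_const.inner continuous_id
        · exact Continuous.finset_inf'_apply hP fun p _ => continuous_const.inner continuous_id
        : Continuous fun v => extent P hP v))
    have hv : ‖v‖ = 1 := by simpa using hv_mem
    haveI : Nonempty {v : EuclideanSpace ℝ (Fin 2) // ‖v‖ = 1} := ⟨⟨v, hv⟩⟩
    have hle : extent P hP v ≤ 2 * r := by
      refine le_trans ?_ hw
      apply le_ciInf
      rintro ⟨w, hw1⟩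
      exact hv_min (by simpa using hw1)
    -- construct the line
    set M : ℝ := P.sup' hP fun p => ⟪p, v⟫_ℝ with hM
    set m : ℝ := P.inf' hP fun p => ⟪p, v⟫_ℝ with hm
    set c : ℝ := (M + m) / 2 with hc
    refine ⟨c • v, perp v, ?_, ?_⟩
    · intro h0
      have : ‖perp v‖ = 0 := by rw [h0, norm_zero]
      rw [norm_perp, hv] at this; norm_num at this
    · intro p hp
      set t : ℝ := -(p 0) * v 1 + p 1 * v 0 with ht
      have hmem : c • v + t • perp v ∈ {x | ∃ s : ℝ, x = c • v + s • perp v} := ⟨t, rfl⟩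
      have hsq := sq_add_sq_of_norm_one hv
      have hdist : dist p (c • v + t • perp v) = |⟪p, v⟫_ℝ - c| := by
        have heq : p - (c • v + t • perp v) = (⟪p, v⟫_ℝ - c) • v := by
          ext i
          fin_cases i
          · show p 0 - (c * v 0 + t * (-(v 1))) = (⟪p, v⟫_ℝ - c) * v 0
            rw [inner_apply2, ht]
            linear_combination (-(p 0)) * hsq
          · show p 1 - (c * v 1 + t * v 0) = (⟪p, v⟫_ℝ - c) * v 1
            rw [inner_apply2, ht]
            linear_combination (-(p 1)) * hsq
        rw [dist_eq_norm, heq, norm_smul, hv, mul_one, Real.norm_eq_abs]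
      have h1 : m ≤ ⟪p, v⟫_ℝ := Finset.inf'_le (fun q => ⟪q, v⟫_ℝ) hp
      have h2 : ⟪p, v⟫_ℝ ≤ M := Finset.le_sup' (fun q => ⟪q, v⟫_ℝ) hp
      have hMm : M - m ≤ 2 * r := hle
      calc Metric.infDist p {x | ∃ s : ℝ, x = c • v + s • perp v}
          ≤ dist p (c • v + t • perp v) := Metric.infDist_le_dist_of_mem hmem
        _ = |⟪p, v⟫_ℝ - c| := hdist
        _ ≤ r := by rw [abs_le]; constructor <;> linarith [h1, h2, hMm, hc.le, hc.ge]
end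

section
/- Let ι be a finite nonempty index set and let p : ι → ℝ → ℝ² be trajectories each of which is 1-Lipschitz in time; write P(s) = {p(j)(s) : j ∈ ι}. Let i ∈ ℤ and suppose that at each of the times i−1 and i a diametral pair d₁(s), d₂(s) of P(s) with d₁(s) ≠ d₂(s) is chosen, and let q'₁(s), q'₂(s) be the corresponding canonical endpoints: q'ⱼ(s) = dⱼ(s) + (c(s) − ⟪dⱼ(s), v(s)⟫)·v(s), where v(s) is a unit vector orthogonal to d₂(s) − d₁(s) and c(s) is the midpoint of the interval [inf_{p∈P(s)} ⟪p, v(s)⟫, sup_{p∈P(s)} ⟪p, v(s)⟫]. For t ∈ [i, i+1] with α = t − i, let qⱼ(t) = (1−α)·q'ⱼ(i−1) + α·q'ⱼ(i) for j = 1, 2. Then for any r ≥ 0 and any segment s₁s₂ such that every point of P(t) is within distance r of segment[s₁, s₂], it holds that dist(q₁(t), q₂(t)) ≤ dist(s₁, s₂) + 2r + 4. -/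
open scoped InnerProductSpace

/-- The diameter of a finite point configuration. -/
noncomputable def configDiam {ι : Type*} [Fintype ι] [Nonempty ι]
    (q : ι → EuclideanSpace ℝ (Fin 2)) : ℝ :=
  Finset.univ.sup' Finset.univ_nonempty fun jk : ι × ι => dist (q jk.1) (q jk.2)

lemma dist_le_of_mem_seg {E : Type*} [NormedAddCommGroup E] [NormedSpace ℝ E]
    {x y s₁ s₂ : E} (hx : x ∈ segment ℝ s₁ s₂) (hy : y ∈ segment ℝ s₁ s₂) :
    dist x y ≤ dist s₁ s₂ := by
  obtain ⟨a, b, ha, hb, hab, rfl⟩ := hx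
  obtain ⟨a', b', ha', hb', hab', rfl⟩ := hy
  have h : (a • s₁ + b • s₂) - (a' • s₁ + b' • s₂) = (a - a') • (s₁ - s₂) := by
    have hb2 : b = 1 - a := by linarith
    have hb2' : b' = 1 - a' := by linarith
    subst hb2 hb2'
    module
  rw [dist_eq_norm, h, norm_smul, dist_eq_norm]
  have h1 : |a - a'| ≤ 1 := by
    rw [abs_le]; constructor <;> linarith
  calc |a - a'| * ‖s₁ - s₂‖ ≤ 1 * ‖s₁ - s₂‖ :=
        mul_le_mul_of_nonneg_right h1 (norm_nonneg _)
    _ = ‖s₁ - s₂‖ := one_mul _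

/-- **length-bound.** For unit-speed trajectories, interpolating between the
canonical solutions at times `i-1` and `i` yields, at any time `t ∈ [i, i+1]`, a segment at
most `2r + 4` longer than any segment that is within distance `r` of all points at time `t`. -/
theorem length_bound {ι : Type*} [Fintype ι] [Nonempty ι]
    (p : ι → ℝ → EuclideanSpace ℝ (Fin 2))
    (hp : ∀ j, LipschitzWith 1 (p j))
    (i : ℤ)
    (d₁ d₂ v q₁' q₂' : ℝ → EuclideanSpace ℝ (Fin 2)) (c : ℝ → ℝ)
    (hd₁ : ∀ s ∈ ({(i : ℝ) - 1, (i : ℝ)} : Set ℝ), ∃ j, d₁ s = p j s)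
    (hd₂ : ∀ s ∈ ({(i : ℝ) - 1, (i : ℝ)} : Set ℝ), ∃ j, d₂ s = p j s)
    (hne : ∀ s ∈ ({(i : ℝ) - 1, (i : ℝ)} : Set ℝ), d₁ s ≠ d₂ s)
    (hdiam : ∀ s ∈ ({(i : ℝ) - 1, (i : ℝ)} : Set ℝ),
      dist (d₁ s) (d₂ s) = configDiam (fun j => p j s))
    (hv : ∀ s ∈ ({(i : ℝ) - 1, (i : ℝ)} : Set ℝ), ‖v s‖ = 1)
    (hperp : ∀ s ∈ ({(i : ℝ) - 1, (i : ℝ)} : Set ℝ), ⟪d₂ s - d₁ s, v s⟫_ℝ = 0)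
    (hc : ∀ s ∈ ({(i : ℝ) - 1, (i : ℝ)} : Set ℝ),
      c s = ((Finset.univ.inf' Finset.univ_nonempty fun j => ⟪p j s, v s⟫_ℝ) +
        (Finset.univ.sup' Finset.univ_nonempty fun j => ⟪p j s, v s⟫_ℝ)) / 2)
    (hq₁' : ∀ s ∈ ({(i : ℝ) - 1, (i : ℝ)} : Set ℝ),
      q₁' s = d₁ s + (c s - ⟪d₁ s, v s⟫_ℝ) • v s)
    (hq₂' : ∀ s ∈ ({(i : ℝ) - 1, (i : ℝ)} : Set ℝ),
      q₂' s = d₂ s + (c s - ⟪d₂ s, v s⟫_ℝ) • v s)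
    (t : ℝ) (ht : t ∈ Set.Icc (i : ℝ) ((i : ℝ) + 1))
    (r : ℝ) (hr : 0 ≤ r)
    (s₁ s₂ : EuclideanSpace ℝ (Fin 2))
    (hrep : ∀ j, Metric.infDist (p j t) (segment ℝ s₁ s₂) ≤ r) :
    dist ((1 - (t - (i : ℝ))) • q₁' ((i : ℝ) - 1) + (t - (i : ℝ)) • q₁' (i : ℝ))
        ((1 - (t - (i : ℝ))) • q₂' ((i : ℝ) - 1) + (t - (i : ℝ)) • q₂' (i : ℝ)) ≤
      dist s₁ s₂ + 2 * r + 4 := by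
  obtain ⟨ht0, ht1⟩ := ht
  set α : ℝ := t - (i : ℝ) with hαdef
  have hα0 : 0 ≤ α := by simp [hαdef]; linarith
  have hα1 : α ≤ 1 := by simp [hαdef]; linarith
  -- at time t, any two points are within dist s₁ s₂ + 2r of each other
  have hseg : ∀ j k, dist (p j t) (p k t) ≤ dist s₁ s₂ + 2 * r := by
    intro j k
    have hcpt : IsCompact (segment ℝ s₁ s₂) := by
      rw [segment_eq_image_lineMap]
      exact isCompact_Icc.image (AffineMap.lineMap s₁ s₂ : ℝ →ᵃ[ℝ] _).continuous_of_finiteDimensional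
    have hnes : (segment ℝ s₁ s₂).Nonempty := ⟨s₁, left_mem_segment ℝ s₁ s₂⟩
    obtain ⟨x, hx, hxd⟩ := hcpt.exists_infDist_eq_dist hnes (p j t)
    obtain ⟨y, hy, hyd⟩ := hcpt.exists_infDist_eq_dist hnes (p k t)
    have h1 : dist (p j t) x ≤ r := by rw [← hxd]; exact hrep j
    have h2 : dist (p k t) y ≤ r := by rw [← hyd]; exact hrep k
    have h3 : dist x y ≤ dist s₁ s₂ := dist_le_of_mem_seg hx hy
    calc dist (p j t) (p k t) ≤ dist (p j t) x + dist x y + dist y (p k t) :=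
          dist_triangle4 _ _ _ _
      _ ≤ r + dist s₁ s₂ + r := by
          gcongr
          rw [dist_comm]; exact h2
      _ = dist s₁ s₂ + 2 * r := by ring
  -- key: canonical solution length bound at s ∈ {i-1, i}
  have key : ∀ s ∈ ({(i : ℝ) - 1, (i : ℝ)} : Set ℝ), |t - s| ≤ 2 →
      dist (q₁' s) (q₂' s) ≤ dist s₁ s₂ + 2 * r + 4 := by
    intro s hs hts
    have heq : q₁' s - q₂' s = d₁ s - d₂ s := by
      rw [hq₁' s hs, hq₂' s hs]
      have hip : ⟪d₂ s, v s⟫_ℝ = ⟪d₁ s, v s⟫_ℝ := by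
        have := hperp s hs
        rw [inner_sub_left] at this
        linarith
      rw [hip]
      abel
    have hdq : dist (q₁' s) (q₂' s) = dist (d₁ s) (d₂ s) := by
      rw [dist_eq_norm, dist_eq_norm, heq]
    rw [hdq, hdiam s hs]
    apply Finset.sup'_le
    intro jk _
    have lip1 : dist (p jk.1 s) (p jk.1 t) ≤ |t - s| := by
      have := (hp jk.1).dist_le_mul s t
      rw [NNReal.coe_one, one_mul] at this
      calc dist (p jk.1 s) (p jk.1 t) ≤ dist s t := this
        _ = |t - s| := by rw [dist_comm, Real.dist_eq]
    have lip2 : dist (p jk.2 s) (p jk.2 t) ≤ |t - s| := by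
      have := (hp jk.2).dist_le_mul s t
      rw [NNReal.coe_one, one_mul] at this
      calc dist (p jk.2 s) (p jk.2 t) ≤ dist s t := this
        _ = |t - s| := by rw [dist_comm, Real.dist_eq]
    have := hseg jk.1 jk.2
    calc dist (p jk.1 s) (p jk.2 s)
        ≤ dist (p jk.1 s) (p jk.1 t) + dist (p jk.1 t) (p jk.2 t) +
            dist (p jk.2 t) (p jk.2 s) := dist_triangle4 _ _ _ _
      _ ≤ |t - s| + (dist s₁ s₂ + 2 * r) + |t - s| := by
          gcongr
          rw [dist_comm]; exact lip2
      _ ≤ dist s₁ s₂ + 2 * r + 4 := by linarith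
  have hmem1 : ((i : ℝ) - 1) ∈ ({(i : ℝ) - 1, (i : ℝ)} : Set ℝ) := Set.mem_insert _ _
  have hmem2 : ((i : ℝ)) ∈ ({(i : ℝ) - 1, (i : ℝ)} : Set ℝ) :=
    Set.mem_insert_of_mem _ rfl
  have hb1 : dist (q₁' ((i : ℝ) - 1)) (q₂' ((i : ℝ) - 1)) ≤ dist s₁ s₂ + 2 * r + 4 := by
    apply key _ hmem1
    rw [abs_le]; constructor <;> linarith
  have hb2 : dist (q₁' (i : ℝ)) (q₂' (i : ℝ)) ≤ dist s₁ s₂ + 2 * r + 4 := by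
    apply key _ hmem2
    rw [abs_le]; constructor <;> linarith
  -- interpolation
  have hdiff :
      ((1 - α) • q₁' ((i : ℝ) - 1) + α • q₁' (i : ℝ)) -
        ((1 - α) • q₂' ((i : ℝ) - 1) + α • q₂' (i : ℝ)) =
      (1 - α) • (q₁' ((i : ℝ) - 1) - q₂' ((i : ℝ) - 1)) + α • (q₁' (i : ℝ) - q₂' (i : ℝ)) := by
    module
  rw [dist_eq_norm, hdiff]
  calc ‖(1 - α) • (q₁' ((i : ℝ) - 1) - q₂' ((i : ℝ) - 1)) + α • (q₁' (i : ℝ) - q₂' (i : ℝ))‖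
      ≤ ‖(1 - α) • (q₁' ((i : ℝ) - 1) - q₂' ((i : ℝ) - 1))‖ +
        ‖α • (q₁' (i : ℝ) - q₂' (i : ℝ))‖ := norm_add_le _ _
    _ = (1 - α) * dist (q₁' ((i : ℝ) - 1)) (q₂' ((i : ℝ) - 1)) +
        α * dist (q₁' (i : ℝ)) (q₂' (i : ℝ)) := by
        rw [norm_smul, norm_smul, Real.norm_eq_abs, Real.norm_eq_abs,
          abs_of_nonneg (by linarith : (0:ℝ) ≤ 1 - α), abs_of_nonneg hα0,
          dist_eq_norm, dist_eq_norm]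
    _ ≤ (1 - α) * (dist s₁ s₂ + 2 * r + 4) + α * (dist s₁ s₂ + 2 * r + 4) := by
        gcongr <;> linarith
    _ = dist s₁ s₂ + 2 * r + 4 := by ring
end
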